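/- Let N ≥ 1, σ > 0, and let ψ : [0,2] → ℝ be a nonnegative strictly decreasing C¹ function with ψ(2) = 0. Suppose x_i, v_i : [0,∞) → ℝ³ (1 ≤ i ≤ N) form a solution of the Cucker–Smale type flocking model on the unit sphere with inter-particle bonding force, i.e., ‖x_i(t)‖ = 1, ⟨x_i(t), v_i(t)⟩ = 0, x_i(t) ≠ −x_k(t) for all i, k and t ≥ 0, and ẋ_i = v_i, v̇_i = −‖v_i‖² x_i + (1/N) Σ_{k=1}^N ψ_{ik} (R_{x_k→x_i}(v_k) − v_i) + (σ/N) Σ_{k=1}^N (x_k − ⟨x_i,x_k⟩ x_i), where ψ_{ik} := ψ(‖x_i − x_k‖). Then the energy E(t) is differentiable and satisfies dE/dt = − Σ_{i,j=1}^N (ψ_{ij}/N²) ‖R_{x_j→x_i}(v_j) − v_i‖² for all t ≥ 0; consequently, E(t) + Σ_{i,j=1}^N ∫_0^t (ψ_{ij}(s)/N²) ‖R_{x_j(s)→x_i(s)}(v_j(s)) − v_i(s)‖² ds ≤ E(0) for all t ≥ 0. -/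

import Mathlib

open Matrix Set
open scoped BigOperators

noncomputable section

/-- The Euclidean norm on `ℝ³`, realized as `Fin 3 → ℝ`. -/
def enorm3 (a : Fin 3 → ℝ) : ℝ := Real.sqrt (a ⬝ᵥ a)

/-- The cross product on `ℝ³`. -/
def cross3 (a b : Fin 3 → ℝ) : Fin 3 → ℝ :=
  ![a 1 * b 2 - a 2 * b 1, a 2 * b 0 - a 0 * b 2, a 0 * b 1 - a 1 * b 0]

/-- The unit vector `u = (z₁ × z₂)/‖z₁ × z₂‖`. -/
def uvec3 (z₁ z₂ : Fin 3 → ℝ) : Fin 3 → ℝ := (enorm3 (cross3 z₁ z₂))⁻¹ • cross3 z₁ z₂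

/-- The rotation matrix `R(z₁,z₂) = ⟨z₁,z₂⟩ I + z₂ z₁ᵀ − z₁ z₂ᵀ + (1 − ⟨z₁,z₂⟩) u uᵀ`. -/
def rotMatrix (z₁ z₂ : Fin 3 → ℝ) : Matrix (Fin 3) (Fin 3) ℝ :=
  (z₁ ⬝ᵥ z₂) • (1 : Matrix (Fin 3) (Fin 3) ℝ)
    + vecMulVec z₂ z₁ - vecMulVec z₁ z₂
    + (1 - z₁ ⬝ᵥ z₂) • vecMulVec (uvec3 z₁ z₂) (uvec3 z₁ z₂)

/-- `R_{z₁→z₂}(v)`, with the convention `R_{z→z} = I`. -/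
def rotApply (z₁ z₂ v : Fin 3 → ℝ) : Fin 3 → ℝ :=
  if z₁ = z₂ then v else (rotMatrix z₁ z₂).mulVec v

/-!
Along the flow, `v_i` is orthogonal to the centripetal term `-‖v_i‖² x_i` and to the radial
parts `⟨x_i, x_k⟩ x_i` of the bonding force, so the bonding force contributes
`(2σ/N²) ⟨Σ v_k, Σ x_k⟩` to `dE/dt`, which cancels the derivative `-(2σ/N²) ⟨Σ x_k, Σ v_k⟩` of the
potential energy. Since `R_{x_j→x_i}` is an isometry and `ψ_ij = ψ_ji`, the alignment term
symmetrises into `-Σ ψ_ij/N² ‖R_{x_j→x_i}(v_j) - v_i‖²`. The integrated inequality follows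
because the dissipation integrands are nonnegative, as `‖x_i - x_j‖ ∈ [0, 2]` where `ψ ≥ 0`.
-/

lemma cross3_eq_crossProduct (a b : Fin 3 → ℝ) : cross3 a b = a ⨯₃ b := (cross_apply a b).symm

lemma dotProduct_self_nonneg {n : Type*} [Fintype n] (v : n → ℝ) : 0 ≤ v ⬝ᵥ v :=
  Finset.sum_nonneg fun i _ => mul_self_nonneg (v i)

lemma dotProduct_self_pos {n : Type*} [Fintype n] {v : n → ℝ} (hv : v ≠ 0) : 0 < v ⬝ᵥ v :=
  (dotProduct_self_nonneg v).lt_of_ne' (dotProduct_self_eq_zero.not.mpr hv)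

lemma enorm3_sq (a : Fin 3 → ℝ) : enorm3 a ^ 2 = a ⬝ᵥ a :=
  Real.sq_sqrt (dotProduct_self_nonneg a)

lemma enorm3_sub_comm (a b : Fin 3 → ℝ) : enorm3 (a - b) = enorm3 (b - a) := by
  rw [← neg_sub, enorm3, enorm3, neg_dotProduct, dotProduct_neg, neg_neg]

-- The right-hand side is the Gram determinant of `a, b, v`.
lemma sq_dotProduct_cross {R : Type*} [CommRing R] (a b v : Fin 3 → R) :
    (a ⨯₃ b ⬝ᵥ v) ^ 2 =
      (a ⬝ᵥ a) * ((b ⬝ᵥ b) * (v ⬝ᵥ v) - (b ⬝ᵥ v) ^ 2)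
      - (a ⬝ᵥ b) * ((a ⬝ᵥ b) * (v ⬝ᵥ v) - (a ⬝ᵥ v) * (b ⬝ᵥ v))
      + (a ⬝ᵥ v) * ((a ⬝ᵥ b) * (b ⬝ᵥ v) - (b ⬝ᵥ b) * (a ⬝ᵥ v)) := by
  simp [cross_apply, dotProduct, Fin.sum_univ_three]
  ring

section UnitVectors

variable {z₁ z₂ : Fin 3 → ℝ}

lemma neg_one_lt_dotProduct (h₁ : z₁ ⬝ᵥ z₁ = 1) (h₂ : z₂ ⬝ᵥ z₂ = 1) (h : z₁ ≠ -z₂) :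
    -1 < z₁ ⬝ᵥ z₂ := by
  have := dotProduct_self_pos (sub_ne_zero.mpr h)
  simp only [sub_neg_eq_add, add_dotProduct, dotProduct_add, h₁, h₂, dotProduct_comm z₂ z₁] at this
  linarith

lemma dotProduct_lt_one (h₁ : z₁ ⬝ᵥ z₁ = 1) (h₂ : z₂ ⬝ᵥ z₂ = 1) (h : z₁ ≠ z₂) :
    z₁ ⬝ᵥ z₂ < 1 := by
  have := dotProduct_self_pos (sub_ne_zero.mpr h)
  simp only [sub_dotProduct, dotProduct_sub, h₁, h₂, dotProduct_comm z₂ z₁] at this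
  linarith

lemma enorm3_sub_le_two (h₁ : z₁ ⬝ᵥ z₁ = 1) (h₂ : z₂ ⬝ᵥ z₂ = 1) : enorm3 (z₁ - z₂) ≤ 2 := by
  have := dotProduct_self_nonneg (z₁ + z₂)
  refine Real.sqrt_le_iff.mpr ⟨zero_le_two, ?_⟩
  simp only [add_dotProduct, dotProduct_add, sub_dotProduct, dotProduct_sub, h₁, h₂,
    dotProduct_comm z₂ z₁] at this ⊢
  linarith

lemma rotMatrix_mulVec (h₁ : z₁ ⬝ᵥ z₁ = 1) (h₂ : z₂ ⬝ᵥ z₂ = 1) (hne : z₁ ≠ z₂) (hne' : z₁ ≠ -z₂)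
    (v : Fin 3 → ℝ) :
    rotMatrix z₁ z₂ *ᵥ v = (z₁ ⬝ᵥ z₂) • v + (z₁ ⬝ᵥ v) • z₂ - (z₂ ⬝ᵥ v) • z₁
      + ((z₁ ⨯₃ z₂ ⬝ᵥ v) / (1 + z₁ ⬝ᵥ z₂)) • z₁ ⨯₃ z₂ := by
  have hsub : 1 - z₁ ⬝ᵥ z₂ ≠ 0 := by linarith [dotProduct_lt_one h₁ h₂ hne]
  have hadd : 1 + z₁ ⬝ᵥ z₂ ≠ 0 := by linarith [neg_one_lt_dotProduct h₁ h₂ hne']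
  have hw : enorm3 (z₁ ⨯₃ z₂) ^ 2 = (1 - z₁ ⬝ᵥ z₂) * (1 + z₁ ⬝ᵥ z₂) := by
    rw [enorm3_sq, cross_dot_cross, h₁, h₂, dotProduct_comm z₂ z₁]; ring
  simp only [rotMatrix, uvec3, cross3_eq_crossProduct, add_mulVec, sub_mulVec, smul_mulVec,
    one_mulVec, vecMulVec_mulVec, op_smul_eq_smul, smul_dotProduct, smul_smul, smul_eq_mul]
  congr 2
  field_simp
  rw [hw]
  field_simp

lemma rotApply_dotProduct_self (h₁ : z₁ ⬝ᵥ z₁ = 1) (h₂ : z₂ ⬝ᵥ z₂ = 1) (hne' : z₁ ≠ -z₂)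
    (v : Fin 3 → ℝ) : rotApply z₁ z₂ v ⬝ᵥ rotApply z₁ z₂ v = v ⬝ᵥ v := by
  unfold rotApply
  split_ifs with hne
  · rfl
  have hc : 1 + z₁ ⬝ᵥ z₂ ≠ 0 := by linarith [neg_one_lt_dotProduct h₁ h₂ hne']
  have hgram := sq_dotProduct_cross z₁ z₂ v
  rw [rotMatrix_mulVec h₁ h₂ hne hne']
  simp only [dotProduct_add, add_dotProduct, dotProduct_sub, sub_dotProduct, dotProduct_smul,
    smul_dotProduct, smul_eq_mul, dot_self_cross, dot_cross_self, cross_dot_cross, h₁, h₂,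
    dotProduct_comm v z₁, dotProduct_comm v z₂, dotProduct_comm z₂ z₁,
    dotProduct_comm v (z₁ ⨯₃ z₂), dotProduct_comm (z₁ ⨯₃ z₂) z₁, dotProduct_comm (z₁ ⨯₃ z₂) z₂]
  rw [h₁, h₂] at hgram
  field_simp
  linear_combination (1 + z₁ ⬝ᵥ z₂) ^ 2 * hgram

end UnitVectors

section Energy

variable {ι m : Type*} [Fintype ι] [Fintype m]

lemma HasDerivAt.dotProduct {f g : ℝ → m → ℝ} {f' g' : m → ℝ} {t : ℝ}
    (hf : HasDerivAt f f' t) (hg : HasDerivAt g g' t) :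
    HasDerivAt (fun s => f s ⬝ᵥ g s) (f' ⬝ᵥ g t + f t ⬝ᵥ g') t := by
  unfold _root_.dotProduct
  rw [← Finset.sum_add_distrib]
  exact HasDerivAt.fun_sum fun i _ => (hasDerivAt_pi.mp hf i).fun_mul (hasDerivAt_pi.mp hg i)

lemma hasDerivAt_energy (c₁ c₂ : ℝ) {x v : ι → ℝ → m → ℝ} {a : ι → m → ℝ} {t : ℝ}
    (hx : ∀ i, HasDerivAt (x i) (v i t) t) (hv : ∀ i, HasDerivAt (v i) (a i) t) :
    HasDerivAt
      (fun s => c₁ * ∑ k, v k s ⬝ᵥ v k s + c₂ * ∑ k, ∑ l, (x k s - x l s) ⬝ᵥ (x k s - x l s))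
      (c₁ * ∑ k, 2 * (v k t ⬝ᵥ a k)
        + c₂ * ∑ k, ∑ l, 2 * ((x k t - x l t) ⬝ᵥ (v k t - v l t))) t := by
  refine ((HasDerivAt.fun_sum fun k _ => ?_).const_mul c₁).add
    ((HasDerivAt.fun_sum fun k _ => HasDerivAt.fun_sum fun l _ => ?_).const_mul c₂)
  · exact ((hv k).dotProduct (hv k)).congr_deriv (by rw [dotProduct_comm (a k)]; ring)
  · exact ((hx k).sub (hx l)).dotProduct ((hx k).sub (hx l)) |>.congr_deriv
      (by simp only [Pi.sub_apply, dotProduct_comm (v k t - v l t)]; ring)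

lemma sum_sum_sub_dotProduct_sub (x v : ι → m → ℝ) (h : ∀ k, x k ⬝ᵥ v k = 0) :
    ∑ k, ∑ l, (x k - x l) ⬝ᵥ (v k - v l) = -2 * ((∑ k, x k) ⬝ᵥ ∑ k, v k) := by
  simp only [sub_dotProduct, dotProduct_sub, h, sum_dotProduct, dotProduct_sum,
    Finset.sum_sub_distrib, Finset.sum_const_zero]
  rw [Finset.sum_comm (f := fun k l => x l ⬝ᵥ v k)]
  ring

lemma two_mul_sum_sum_mul_dotProduct_sub (P : ι → ι → ℝ) (hP : ∀ i j, P i j = P j i)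
    (v : ι → m → ℝ) (r : ι → ι → m → ℝ) (hr : ∀ i j, r i j ⬝ᵥ r i j = v j ⬝ᵥ v j) :
    2 * ∑ i, ∑ j, P i j * (v i ⬝ᵥ (r i j - v i))
      = -∑ i, ∑ j, P i j * ((r i j - v i) ⬝ᵥ (r i j - v i)) := by
  have hswap : ∑ i, ∑ j, P i j * (v j ⬝ᵥ v j) = ∑ i, ∑ j, P i j * (v i ⬝ᵥ v i) := by
    rw [Finset.sum_comm]
    exact Finset.sum_congr rfl fun i _ => Finset.sum_congr rfl fun j _ => by rw [hP]
  have hterm : ∀ i j, P i j * ((r i j - v i) ⬝ᵥ (r i j - v i))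
      = P i j * (v j ⬝ᵥ v j) - P i j * (v i ⬝ᵥ v i) - 2 * (P i j * (v i ⬝ᵥ (r i j - v i))) := by
    intro i j
    rw [← hr i j]
    simp only [sub_dotProduct, dotProduct_sub, dotProduct_comm (r i j) (v i)]
    ring
  simp only [hterm, Finset.sum_sub_distrib, hswap, ← Finset.mul_sum]
  ring

lemma energy_derivative_eq (n σ : ℝ) (P : ι → ι → ℝ) (hP : ∀ i j, P i j = P j i)
    (x v : ι → m → ℝ) (r : ι → ι → m → ℝ) (htan : ∀ k, x k ⬝ᵥ v k = 0)
    (hr : ∀ i j, r i j ⬝ᵥ r i j = v j ⬝ᵥ v j) :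
    n⁻¹ * ∑ k, 2 * (v k ⬝ᵥ ((-(v k ⬝ᵥ v k)) • x k + n⁻¹ • ∑ j, P k j • (r k j - v k)
        + (σ / n) • ∑ j, (x j - (x k ⬝ᵥ x j) • x k)))
      + σ / (2 * n ^ 2) * ∑ k, ∑ l, 2 * ((x k - x l) ⬝ᵥ (v k - v l))
      = -∑ i, ∑ j, P i j / n ^ 2 * ((r i j - v i) ⬝ᵥ (r i j - v i)) := by
  have hacc : ∀ k, v k ⬝ᵥ ((-(v k ⬝ᵥ v k)) • x k + n⁻¹ • ∑ j, P k j • (r k j - v k)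
      + (σ / n) • ∑ j, (x j - (x k ⬝ᵥ x j) • x k))
      = n⁻¹ * ∑ j, P k j * (v k ⬝ᵥ (r k j - v k)) + σ / n * (v k ⬝ᵥ ∑ j, x j) := by
    intro k
    simp only [dotProduct_add, dotProduct_smul, dotProduct_sum, dotProduct_sub,
      dotProduct_comm (v k) (x k), htan k, smul_eq_mul, mul_zero, sub_zero]
    ring
  have hbond := sum_sum_sub_dotProduct_sub x v htan
  have halign := two_mul_sum_sum_mul_dotProduct_sub P hP v r hr
  simp only [hacc, ← Finset.mul_sum, Finset.sum_add_distrib, ← sum_dotProduct,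
    div_mul_eq_mul_div, ← Finset.sum_div, dotProduct_comm (∑ k, v k)] at hbond ⊢
  linear_combination (n⁻¹ ^ 2) * halign + σ / n ^ 2 * hbond

end Energy

-- Terms that are not interval integrable have integral `0`, so only the integrable ones need
-- to be compared with `-g'`.
open intervalIntegral in
lemma add_sum_integral_le_of_hasDerivAt {ι : Type*} (s : Finset ι) {f : ι → ℝ → ℝ}
    {g g' : ℝ → ℝ} {a b : ℝ} (hab : a ≤ b) (hg : ∀ x ∈ Icc a b, HasDerivAt g (g' x) x)
    (hf : ∀ i ∈ s, ∀ x ∈ Icc a b, 0 ≤ f i x) (hfg : ∀ x ∈ Icc a b, ∑ i ∈ s, f i x ≤ -g' x) :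
    g b + ∑ i ∈ s, ∫ x in a..b, f i x ≤ g a := by
  classical
  set S := s.filter fun i => IntervalIntegrable (f i) MeasureTheory.volume a b
  have hS : ∑ i ∈ s, ∫ x in a..b, f i x = ∫ x in a..b, ∑ i ∈ S, f i x := by
    rw [integral_finsetSum fun i hi => (Finset.mem_filter.mp hi).2]
    exact (Finset.sum_filter_of_ne fun i _ h => not_not.mp (mt integral_undef h)).symm
  have hSint : MeasureTheory.IntegrableOn (∑ i ∈ S, f i) (Icc a b) :=
    (intervalIntegrable_iff_integrableOn_Icc_of_le hab).mp
      (IntervalIntegrable.sum S fun i hi => (Finset.mem_filter.mp hi).2)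
  have hle := integral_le_sub_of_hasDeriv_right_of_le hab (HasDerivAt.continuousOn hg).neg
    (fun x hx => (hg x (Ioo_subset_Icc_self hx)).neg.hasDerivWithinAt) hSint
    fun x hx => (Finset.sum_apply x S f).trans_le <|
      (Finset.sum_le_sum_of_subset_of_nonneg (Finset.filter_subset _ s)
        fun i hi _ => hf i hi x (Ioo_subset_Icc_self hx)).trans (hfg x (Ioo_subset_Icc_self hx))
  simp only [Finset.sum_apply, Pi.neg_apply] at hle
  linarith

theorem energy_dissipation_general (N : ℕ) (σ : ℝ)
    (ψ : ℝ → ℝ) (hψnn : ∀ s ∈ Set.Icc (0:ℝ) 2, 0 ≤ ψ s)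
    (x v : Fin N → ℝ → Fin 3 → ℝ)
    (hsph : ∀ i, ∀ t : ℝ, 0 ≤ t → enorm3 (x i t) = 1)
    (htan : ∀ i, ∀ t : ℝ, 0 ≤ t → (x i t) ⬝ᵥ (v i t) = 0)
    (hanti : ∀ i k, ∀ t : ℝ, 0 ≤ t → x i t ≠ -(x k t))
    (hode1 : ∀ i, ∀ t : ℝ, 0 ≤ t → HasDerivAt (x i) (v i t) t)
    (hode2 : ∀ i, ∀ t : ℝ, 0 ≤ t → HasDerivAt (v i)
      ((-(enorm3 (v i t))^2) • x i t
        + (N : ℝ)⁻¹ • ∑ k, ψ (enorm3 (x i t - x k t)) •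
            (rotApply (x k t) (x i t) (v k t) - v i t)
        + (σ / N) • ∑ k, (x k t - ((x i t) ⬝ᵥ (x k t)) • x i t)) t)
    (E : ℝ → ℝ)
    (hE : ∀ t, E t = (N : ℝ)⁻¹ * ∑ k, (enorm3 (v k t))^2
      + σ / (2 * N^2) * ∑ k, ∑ l, (enorm3 (x k t - x l t))^2) :
    (∀ t : ℝ, 0 ≤ t → HasDerivAt E
      (- ∑ i, ∑ j, ψ (enorm3 (x i t - x j t)) / N^2 *
        (enorm3 (rotApply (x j t) (x i t) (v j t) - v i t))^2) t) ∧
    (∀ t : ℝ, 0 ≤ t →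
      E t + ∑ i, ∑ j, (∫ s in (0:ℝ)..t, ψ (enorm3 (x i s - x j s)) / N^2 *
        (enorm3 (rotApply (x j s) (x i s) (v j s) - v i s))^2) ≤ E 0) := by
  have hunit : ∀ i t, 0 ≤ t → x i t ⬝ᵥ x i t = 1 := fun i t ht => by
    rw [← enorm3_sq, hsph i t ht, one_pow]
  have hE' : E = fun s => (N : ℝ)⁻¹ * ∑ k, v k s ⬝ᵥ v k s
      + σ / (2 * N ^ 2) * ∑ k, ∑ l, (x k s - x l s) ⬝ᵥ (x k s - x l s) := by
    funext s
    simp only [hE, enorm3_sq]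
  have hderiv : ∀ t : ℝ, 0 ≤ t → HasDerivAt E (- ∑ i, ∑ j, ψ (enorm3 (x i t - x j t)) / N^2 *
      (enorm3 (rotApply (x j t) (x i t) (v j t) - v i t))^2) t := by
    intro t ht
    rw [hE']
    refine (hasDerivAt_energy _ _ (hode1 · t ht) (hode2 · t ht)).congr_deriv ?_
    simp only [enorm3_sq]
    exact energy_derivative_eq _ σ _ (fun i j => by rw [enorm3_sub_comm]) (x · t) (v · t)
      (fun i j => rotApply (x j t) (x i t) (v j t)) (htan · t ht)
      fun i j => rotApply_dotProduct_self (hunit j t ht) (hunit i t ht) (hanti j i t ht) _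
  refine ⟨hderiv, fun t ht => ?_⟩
  have hdiss := add_sum_integral_le_of_hasDerivAt Finset.univ ht (fun s hs => hderiv s hs.1)
    (f := fun (ij : Fin N × Fin N) s => ψ (enorm3 (x ij.1 s - x ij.2 s)) / N^2 *
        (enorm3 (rotApply (x ij.2 s) (x ij.1 s) (v ij.2 s) - v ij.1 s))^2)
    (fun ij _ s hs => mul_nonneg (div_nonneg (hψnn _ ⟨Real.sqrt_nonneg _,
      enorm3_sub_le_two (hunit _ s hs.1) (hunit _ s hs.1)⟩) (sq_nonneg _)) (sq_nonneg _))
    (fun s _ => by rw [neg_neg, Fintype.sum_prod_type])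
  rwa [Fintype.sum_prod_type] at hdiss

/-- Energy dissipation for the Cucker–Smale type flocking model on the
unit sphere with inter-particle bonding force: the energy
`E(t) = (1/N) Σ_k ‖v_k‖² + (σ/(2N²)) Σ_{k,l} ‖x_k − x_l‖²` satisfies
`dE/dt = −Σ_{i,j} (ψ_{ij}/N²)‖R_{x_j→x_i}(v_j) − v_i‖²`, and consequently
`E(t) + Σ_{i,j} ∫_0^t (ψ_{ij}(s)/N²)‖R(v_j) − v_i‖² ds ≤ E(0)`. -/
theorem energy_dissipation (N : ℕ) (hN : 1 ≤ N) (σ : ℝ) (hσ : 0 < σ)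
    (ψ : ℝ → ℝ) (hψreg : ContDiffOn ℝ 1 ψ (Set.Icc 0 2))
    (hψnn : ∀ s ∈ Set.Icc (0:ℝ) 2, 0 ≤ ψ s)
    (hψanti : StrictAntiOn ψ (Set.Icc 0 2)) (hψ2 : ψ 2 = 0)
    (x v : Fin N → ℝ → Fin 3 → ℝ)
    (hsph : ∀ i, ∀ t : ℝ, 0 ≤ t → enorm3 (x i t) = 1)
    (htan : ∀ i, ∀ t : ℝ, 0 ≤ t → (x i t) ⬝ᵥ (v i t) = 0)
    (hanti : ∀ i k, ∀ t : ℝ, 0 ≤ t → x i t ≠ -(x k t))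
    (hode1 : ∀ i, ∀ t : ℝ, 0 ≤ t → HasDerivAt (x i) (v i t) t)
    (hode2 : ∀ i, ∀ t : ℝ, 0 ≤ t → HasDerivAt (v i)
      ((-(enorm3 (v i t))^2) • x i t
        + (N : ℝ)⁻¹ • ∑ k, ψ (enorm3 (x i t - x k t)) •
            (rotApply (x k t) (x i t) (v k t) - v i t)
        + (σ / N) • ∑ k, (x k t - ((x i t) ⬝ᵥ (x k t)) • x i t)) t)
    (E : ℝ → ℝ)
    (hE : ∀ t, E t = (N : ℝ)⁻¹ * ∑ k, (enorm3 (v k t))^2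
      + σ / (2 * N^2) * ∑ k, ∑ l, (enorm3 (x k t - x l t))^2) :
    (∀ t : ℝ, 0 ≤ t → HasDerivAt E
      (- ∑ i, ∑ j, ψ (enorm3 (x i t - x j t)) / N^2 *
        (enorm3 (rotApply (x j t) (x i t) (v j t) - v i t))^2) t) ∧
    (∀ t : ℝ, 0 ≤ t →
      E t + ∑ i, ∑ j, (∫ s in (0:ℝ)..t, ψ (enorm3 (x i s - x j s)) / N^2 *
        (enorm3 (rotApply (x j s) (x i s) (v j s) - v i s))^2) ≤ E 0) :=
  energy_dissipation_general N σ ψ hψnn x v hsph htan hanti hode1 hode2 E hE
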